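/- Let d = 3 and φ = ψ = (2 3). Then B_3^ι is the convex hull of the four matrices: the identity, [[1,0,0],[0,0,1],[0,1,0]], [[0,1/2,1/2],[1/2,1/2,0],[1/2,0,1/2]], and [[0,1/2,1/2],[1/2,0,1/2],[1/2,1/2,0]], i.e., it is a 2-dimensional square. -/

import Mathlib

/-- The `ι`-invariant Birkhoff polytope for the involution `(ιM)_{ij} = M_{φ(i)ψ(j)}`. -/
def invBirkhoff (d : ℕ) (φ ψ : Equiv.Perm (Fin d)) : Set (Matrix (Fin d) (Fin d) ℝ) :=
  {M | M ∈ doublyStochastic ℝ (Fin d) ∧ (fun i j => M (φ i) (ψ j)) = M}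

private lemma swap12_0 : Equiv.swap (1 : Fin 3) 2 0 = 0 := by decide
private lemma swap12_1 : Equiv.swap (1 : Fin 3) 2 1 = 2 := by decide
private lemma swap12_2 : Equiv.swap (1 : Fin 3) 2 2 = 1 := by decide

private lemma mem_hull4 {E : Type*} [AddCommGroup E] [Module ℝ E] (A B C D : E)
    {w1 w2 w3 w4 : ℝ} (h1 : 0 ≤ w1) (h2 : 0 ≤ w2) (h3 : 0 ≤ w3) (h4 : 0 ≤ w4)
    (hs : w1 + w2 + w3 + w4 = 1) :
    w1 • A + w2 • B + w3 • C + w4 • D ∈ convexHull ℝ ({A, B, C, D} : Set E) := by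
  have := (convex_convexHull ℝ ({A, B, C, D} : Set E)).sum_mem
    (t := (Finset.univ : Finset (Fin 4))) (w := ![w1, w2, w3, w4]) (z := ![A, B, C, D])
    (fun i _ => by fin_cases i <;> assumption)
    (by simp [Fin.sum_univ_four, hs])
    (fun i _ => by
      apply subset_convexHull
      fin_cases i <;> simp)
  simpa [Fin.sum_univ_four] using this

/-- For `d = 3` and `φ = ψ = (2 3)`, the invariant Birkhoff polytope `B_3^ι` is a
square: the convex hull of the four indicated matrices. -/
theorem stmt_8 :
    invBirkhoff 3 (Equiv.swap 1 2) (Equiv.swap 1 2) =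
      convexHull ℝ {(1 : Matrix (Fin 3) (Fin 3) ℝ),
        !![(1:ℝ), 0, 0; 0, 0, 1; 0, 1, 0],
        !![(0:ℝ), 1/2, 1/2; 1/2, 1/2, 0; 1/2, 0, 1/2],
        !![(0:ℝ), 1/2, 1/2; 1/2, 0, 1/2; 1/2, 1/2, 0]} := by
  apply le_antisymm
  · -- forward: every invariant matrix is a convex combination
    intro M hM
    obtain ⟨hDS, hsym⟩ := hM
    obtain ⟨hnn, hrow, hcol⟩ := mem_doublyStochastic_iff_sum.1 hDS
    have e01 : M 0 2 = M 0 1 := by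
      have := congrFun (congrFun hsym 0) 1
      simpa [swap12_0, swap12_1] using this
    have e10 : M 2 0 = M 1 0 := by
      have := congrFun (congrFun hsym 1) 0
      simpa [swap12_0, swap12_1] using this
    have e11 : M 2 2 = M 1 1 := by
      have := congrFun (congrFun hsym 1) 1
      simpa [swap12_1] using this
    have e12 : M 2 1 = M 1 2 := by
      have := congrFun (congrFun hsym 1) 2
      simpa [swap12_1, swap12_2] using this
    have r0 := hrow 0; have r1 := hrow 1; have r2 := hrow 2
    have c0 := hcol 0; have c1 := hcol 1
    simp only [Fin.sum_univ_three] at r0 r1 r2 c0 c1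
    set a := M 0 0 with ha
    set b := M 1 1 with hb
    have n00 := hnn 0 0
    have n01 := hnn 0 1
    have n11 := hnn 1 1
    have n12 := hnn 1 2
    -- find weights
    obtain ⟨w1, w2, w3, w4, h1, h2, h3, h4, hs, hwa, hwb⟩ :
        ∃ w1 w2 w3 w4 : ℝ, 0 ≤ w1 ∧ 0 ≤ w2 ∧ 0 ≤ w3 ∧ 0 ≤ w4 ∧
          w1 + w2 + w3 + w4 = 1 ∧ w1 + w2 = a ∧ w1 + w3 / 2 = b := by
      rcases le_total b ((1 - a) / 2) with hcase | hcase
      · exact ⟨0, a, 2 * b, 1 - a - 2 * b, le_rfl, n00, by linarith, by linarith,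
          by ring, by ring, by ring⟩
      · exact ⟨b - (1 - a) / 2, (1 + a) / 2 - b, 1 - a, 0,
          by linarith, by linarith, by linarith, le_rfl, by ring, by ring, by ring⟩
    have key : M = w1 • (1 : Matrix (Fin 3) (Fin 3) ℝ)
        + w2 • !![(1:ℝ), 0, 0; 0, 0, 1; 0, 1, 0]
        + w3 • !![(0:ℝ), 1/2, 1/2; 1/2, 1/2, 0; 1/2, 0, 1/2]
        + w4 • !![(0:ℝ), 1/2, 1/2; 1/2, 0, 1/2; 1/2, 1/2, 0] := by
      ext i j
      fin_cases i <;> fin_cases j <;>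
        simp [Matrix.one_apply, Matrix.add_apply, Matrix.smul_apply, Matrix.vecHead, Matrix.vecTail] <;>
        linarith
    rw [key]
    exact mem_hull4 _ _ _ _ h1 h2 h3 h4 hs
  · -- reverse: the hull is contained in the (convex) invariant polytope
    apply convexHull_min
    · rintro M (rfl | rfl | rfl | rfl)
      · exact ⟨one_mem _, by
          funext i j
          fin_cases i <;> fin_cases j <;>
            simp [swap12_0, swap12_1, swap12_2, Matrix.one_apply]⟩
      all_goals
        refine ⟨mem_doublyStochastic_iff_sum.2 ⟨fun i j => by fin_cases i <;> fin_cases j <;> norm_num [Matrix.vecHead, Matrix.vecTail],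
          fun i => by fin_cases i <;> norm_num [Fin.sum_univ_three, Matrix.vecHead, Matrix.vecTail, Matrix.cons_val_two],
          fun j => by fin_cases j <;> norm_num [Fin.sum_univ_three, Matrix.vecHead, Matrix.vecTail, Matrix.cons_val_two]⟩, ?_⟩
      all_goals
        funext i j
        fin_cases i <;> fin_cases j <;>
          simp [swap12_0, swap12_1, swap12_2, Matrix.vecHead, Matrix.vecTail]
    · -- convexity of invBirkhoff
      intro M hM N hN s t hsn htn hst
      refine ⟨convex_doublyStochastic hM.1 hN.1 hsn htn hst, ?_⟩
      funext i j
      have hm := congrFun (congrFun hM.2 i) j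
      have hn := congrFun (congrFun hN.2 i) j
      simp [Matrix.add_apply, Matrix.smul_apply, hm, hn]
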